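/- Let X be a nonempty set, W = W(X) the free monoid on X, F = A × W the free right W-act with basis A, P ⊆ F a subact, and B_P its canonical basis. Suppose degree functions deg_X : X → ℕ with deg_X(x) ≥ 1 for all x ∈ X, and deg_A : A → ℕ are given; extend the degree to W by deg(x_{i_1}⋯x_{i_k}) = deg_X(x_{i_1}) + ⋯ + deg_X(x_{i_k}) (with deg(1)=0) and to F by deg(a,w) = deg_A(a) + deg(w). Assume that for every n ∈ ℕ the sets of elements of degree n in A, in X, and in F ∖ P are finite, with cardinalities c_n(A), c_n(X), c_n(F∖P). Then for every n ∈ ℕ the set of elements of degree n in B_P is finite, and its cardinality satisfies c_n(B_P) = c_n(A) + Σ_{i=0}^{n−1} c_i(F∖P)·c_{n−i}(X) − c_n(F∖P). (Equivalently, in terms of Hilbert series, H(B_P,t) = H(A,t) + H(F∖P,t)(H(X,t) − 1).) -/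

import Mathlib

/-!
Every element of the free act `F = A × W(X)` is either a root `(a, 1)` or, uniquely, `p · x`
with `p ∈ F` and `x ∈ X`. For a subact `P`, the roots together with the elements `p · x` with
`p ∉ P` are exactly the elements of `B_P ⊔ (F ∖ P)`: a non-root element outside `P` has its
parent outside `P`, because `P` is closed under the action. Counting elements of degree `n` on
both sides, with `deg (p · x) = deg p + deg x` and `deg x ≥ 1`, gives
`c_n(B_P) + c_n(F ∖ P) = c_n(A) + Σ_{i<n} c_i(F ∖ P) c_{n-i}(X)`.
-/

/-- A subset `P` of the free right act `F = A × W(X)` (with action `(a,w)·u = (a, w*u)`)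
is a subact if it is closed under the action of the free monoid `W(X)`. -/
def IsSubact {A X : Type*} (P : Set (A × FreeMonoid X)) : Prop :=
  ∀ p ∈ P, ∀ u : FreeMonoid X, (p.1, p.2 * u) ∈ P

/-- The canonical basis of a subact `P` of the free act `A × W(X)`. -/
def canonicalBasis {A X : Type*} (P : Set (A × FreeMonoid X)) : Set (A × FreeMonoid X) :=
  {p | p ∈ P ∧ (p.2 = 1 ∨
    ∃ (w : FreeMonoid X) (x : X), p.2 = w * FreeMonoid.of x ∧ (p.1, w) ∉ P)}

/-- The additive extension of a degree function `degX : X → ℕ` to the free monoid `W(X)`. -/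
def monoidDeg {X : Type*} (degX : X → ℕ) (w : FreeMonoid X) : ℕ :=
  ((FreeMonoid.toList w).map degX).sum

/-- The degree of an element `(a,w)` of the free act `A × W(X)`:
`deg (a,w) = deg_A a + deg w`. -/
def actDeg {A X : Type*} (degA : A → ℕ) (degX : X → ℕ) (p : A × FreeMonoid X) : ℕ :=
  degA p.1 + monoidDeg degX p.2

open Set

namespace FreeMonoid

variable {α : Type*}

theorem eq_one_or_exists_eq_mul_of (w : FreeMonoid α) : w = 1 ∨ ∃ v x, w = v * of x :=
  List.eq_nil_or_concat' w

theorem mul_of_inj {v v' : FreeMonoid α} {x x' : α} :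
    v * of x = v' * of x' ↔ v = v' ∧ x = x' :=
  List.append_singleton_inj

theorem mul_of_ne_one (v : FreeMonoid α) (x : α) : v * of x ≠ 1 := by
  simp [← length_eq_zero, length_of]

end FreeMonoid

open FreeMonoid

section Convolution

variable {α β : Type*} (f : α → ℕ) (g : β → ℕ) (s : Set α) (n : ℕ)

theorem setOf_fst_mem_add_eq_eq_biUnion :
    {q : α × β | q.1 ∈ s ∧ f q.1 + g q.2 = n} =
      ⋃ i ∈ (Finset.range (n + 1) : Set ℕ), (s ∩ f ⁻¹' {i}) ×ˢ (g ⁻¹' {n - i}) := by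
  ext ⟨a, b⟩
  simp only [mem_ofPred_eq, mem_iUnion, Finset.coe_range, mem_Iio, mem_prod, mem_inter_iff,
    mem_preimage, mem_singleton_iff, exists_prop]
  constructor
  · rintro ⟨ha, hab⟩
    exact ⟨f a, by omega, ⟨ha, rfl⟩, by omega⟩
  · rintro ⟨i, hi, ⟨ha, rfl⟩, hb⟩
    exact ⟨ha, by omega⟩

variable {f g s}

theorem finite_setOf_fst_mem_add_eq (hs : ∀ i, (s ∩ f ⁻¹' {i}).Finite)
    (hg : ∀ j, (g ⁻¹' {j}).Finite) :
    {q : α × β | q.1 ∈ s ∧ f q.1 + g q.2 = n}.Finite := by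
  rw [setOf_fst_mem_add_eq_eq_biUnion]
  exact (Finset.range (n + 1)).finite_toSet.biUnion fun i _ ↦ (hs i).prod (hg (n - i))

theorem ncard_setOf_fst_mem_add_eq (hs : ∀ i, (s ∩ f ⁻¹' {i}).Finite)
    (hg : ∀ j, (g ⁻¹' {j}).Finite) :
    {q : α × β | q.1 ∈ s ∧ f q.1 + g q.2 = n}.ncard =
      ∑ i ∈ Finset.range (n + 1), (s ∩ f ⁻¹' {i}).ncard * (g ⁻¹' {n - i}).ncard := by
  have hdisj : (Finset.range (n + 1) : Set ℕ).PairwiseDisjoint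
      fun i ↦ (s ∩ f ⁻¹' {i}) ×ˢ (g ⁻¹' {n - i}) := by
    intro i _ j _ hij
    exact disjoint_left.2 fun q hi hj ↦ hij (hi.1.2.symm.trans hj.1.2)
  rw [setOf_fst_mem_add_eq_eq_biUnion, (Finset.range (n + 1)).finite_toSet.ncard_biUnion
    (fun i _ ↦ (hs i).prod (hg (n - i))) hdisj, finsum_mem_coe_finset]
  simp only [ncard_prod]

end Convolution

section FreeAct

variable {A X : Type*}

def appendLetter (q : (A × FreeMonoid X) × X) : A × FreeMonoid X :=
  (q.1.1, q.1.2 * of q.2)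

theorem appendLetter_injective : Function.Injective (appendLetter (A := A) (X := X)) := by
  rintro ⟨⟨a, v⟩, x⟩ ⟨⟨a', v'⟩, x'⟩ h
  obtain ⟨rfl, h⟩ := Prod.mk.inj h
  obtain ⟨rfl, rfl⟩ := mul_of_inj.1 h
  rfl

theorem disjoint_range_image_appendLetter (S : Set ((A × FreeMonoid X) × X)) :
    Disjoint (range fun a : A ↦ (a, (1 : FreeMonoid X))) (appendLetter '' S) := by
  rw [disjoint_left]
  rintro _ ⟨a, rfl⟩ ⟨q, -, hq⟩
  exact mul_of_ne_one q.1.2 q.2 (Prod.mk.inj hq).2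

theorem disjoint_canonicalBasis_compl (P : Set (A × FreeMonoid X)) :
    Disjoint (canonicalBasis P) Pᶜ :=
  disjoint_left.2 fun _ hp hp' ↦ hp' hp.1

theorem canonicalBasis_union_compl {P : Set (A × FreeMonoid X)} (hP : IsSubact P) :
    canonicalBasis P ∪ Pᶜ =
      range (fun a : A ↦ (a, (1 : FreeMonoid X))) ∪ appendLetter '' (Pᶜ ×ˢ univ) := by
  ext ⟨a, w⟩
  constructor
  · rintro (⟨-, rfl | ⟨v, x, rfl, hv⟩⟩ | hw)
    · exact Or.inl ⟨a, rfl⟩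
    · exact Or.inr ⟨((a, v), x), ⟨hv, trivial⟩, rfl⟩
    · obtain rfl | ⟨v, x, rfl⟩ := eq_one_or_exists_eq_mul_of w
      · exact Or.inl ⟨a, rfl⟩
      · exact Or.inr ⟨((a, v), x), ⟨fun hv ↦ hw (hP _ hv (of x)), trivial⟩, rfl⟩
  · intro h
    by_cases hw : (a, w) ∈ P
    · refine Or.inl ⟨hw, ?_⟩
      rcases h with ⟨a', ha'⟩ | ⟨⟨⟨a', v⟩, x⟩, ⟨hv, -⟩, ha'⟩ <;>
        obtain ⟨rfl, rfl⟩ := Prod.mk.inj ha'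
      · exact Or.inl rfl
      · exact Or.inr ⟨v, x, rfl, hv⟩
    · exact Or.inr hw

variable (degA : A → ℕ) (degX : X → ℕ)

theorem actDeg_appendLetter (q : (A × FreeMonoid X) × X) :
    actDeg degA degX (appendLetter q) = actDeg degA degX q.1 + degX q.2 := by
  simp [appendLetter, actDeg, monoidDeg, add_assoc]

theorem range_inter_actDeg_preimage (n : ℕ) :
    range (fun a : A ↦ (a, (1 : FreeMonoid X))) ∩ actDeg degA degX ⁻¹' {n} =
      (fun a : A ↦ (a, (1 : FreeMonoid X))) '' (degA ⁻¹' {n}) := by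
  rw [← image_univ, ← image_inter_preimage, univ_inter]
  rfl

theorem image_appendLetter_inter_actDeg_preimage (S : Set (A × FreeMonoid X)) (n : ℕ) :
    appendLetter '' (S ×ˢ univ) ∩ actDeg degA degX ⁻¹' {n} =
      appendLetter '' {q | q.1 ∈ S ∧ actDeg degA degX q.1 + degX q.2 = n} := by
  rw [← image_inter_preimage]
  congr 1
  ext q
  simp [actDeg_appendLetter]

end FreeAct

theorem finite_and_ncard_canonicalBasis_union_compl_inter_actDeg_preimage {A X : Type*}
    {degA : A → ℕ} {degX : X → ℕ} (hdegX : ∀ x, 1 ≤ degX x) {P : Set (A × FreeMonoid X)}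
    (hP : IsSubact P) (hA : ∀ n, (degA ⁻¹' {n}).Finite) (hX : ∀ n, (degX ⁻¹' {n}).Finite)
    (hFP : ∀ n, (Pᶜ ∩ actDeg degA degX ⁻¹' {n}).Finite) (n : ℕ) :
    ((canonicalBasis P ∪ Pᶜ) ∩ actDeg degA degX ⁻¹' {n}).Finite ∧
      ((canonicalBasis P ∪ Pᶜ) ∩ actDeg degA degX ⁻¹' {n}).ncard =
        (degA ⁻¹' {n}).ncard + ∑ i ∈ Finset.range n,
          (Pᶜ ∩ actDeg degA degX ⁻¹' {i}).ncard * (degX ⁻¹' {n - i}).ncard := by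
  have hX₀ : degX ⁻¹' {0} = ∅ :=
    eq_empty_of_forall_notMem fun x hx ↦ by simpa [show degX x = 0 from hx] using hdegX x
  rw [canonicalBasis_union_compl hP, union_inter_distrib_right, range_inter_actDeg_preimage,
    image_appendLetter_inter_actDeg_preimage]
  have hroots := (hA n).image fun a : A ↦ (a, (1 : FreeMonoid X))
  have hchildren := (finite_setOf_fst_mem_add_eq n hFP hX).image appendLetter
  refine ⟨hroots.union hchildren, ?_⟩
  rw [ncard_union_eq ((disjoint_range_image_appendLetter _).mono_left (image_subset_range _ _))
      hroots hchildren, ncard_image_of_injective _ fun a a' h ↦ (Prod.mk.inj h).1,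
    ncard_image_of_injective _ appendLetter_injective, ncard_setOf_fst_mem_add_eq n hFP hX,
    Finset.sum_range_succ, Nat.sub_self, hX₀, ncard_empty, mul_zero, add_zero]

theorem hilbert_series_subact_general {A X : Type*}
    (degX : X → ℕ) (degA : A → ℕ) (hdegX : ∀ x, 1 ≤ degX x)
    (P : Set (A × FreeMonoid X)) (hP : IsSubact P)
    (hA : ∀ n : ℕ, {a : A | degA a = n}.Finite)
    (hX : ∀ n : ℕ, {x : X | degX x = n}.Finite)
    (hFP : ∀ n : ℕ, {p : A × FreeMonoid X | p ∉ P ∧ actDeg degA degX p = n}.Finite) :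
    ∀ n : ℕ,
      {b | b ∈ canonicalBasis P ∧ actDeg degA degX b = n}.Finite ∧
      ({b | b ∈ canonicalBasis P ∧ actDeg degA degX b = n}.ncard : ℤ) =
        ({a : A | degA a = n}.ncard : ℤ)
        + ∑ i ∈ Finset.range n,
            ({p : A × FreeMonoid X | p ∉ P ∧ actDeg degA degX p = i}.ncard : ℤ)
              * ({x : X | degX x = n - i}.ncard : ℤ)
        - ({p : A × FreeMonoid X | p ∉ P ∧ actDeg degA degX p = n}.ncard : ℤ) := by
  intro n
  obtain ⟨hfin, hcard⟩ :=
    finite_and_ncard_canonicalBasis_union_compl_inter_actDeg_preimage hdegX hP hA hX hFP n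
  have hB : (canonicalBasis P ∩ actDeg degA degX ⁻¹' {n}).Finite :=
    hfin.subset (inter_subset_inter_left _ subset_union_left)
  have hQ : (Pᶜ ∩ actDeg degA degX ⁻¹' {n}).Finite := hFP n
  have hsplit := ncard_union_eq
    ((disjoint_canonicalBasis_compl P).mono inter_subset_left inter_subset_left) hB hQ
  rw [← union_inter_distrib_right, hcard] at hsplit
  refine ⟨hB, eq_sub_of_add_eq ?_⟩
  exact_mod_cast hsplit.symm

/-- Schreier formula for the Hilbert series of the canonical basis of a subact of a free
act over a free monoid:
`c_n(B_P) = c_n(A) + Σ_{i=0}^{n-1} c_i(F∖P) c_{n-i}(X) − c_n(F∖P)`, i.e.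
`H(B_P,t) = H(A,t) + H(F∖P,t)(H(X,t) − 1)`. -/
theorem hilbert_series_subact {A X : Type*} [Nonempty X]
    (degX : X → ℕ) (degA : A → ℕ) (hdegX : ∀ x, 1 ≤ degX x)
    (P : Set (A × FreeMonoid X)) (hP : IsSubact P)
    (hA : ∀ n : ℕ, {a : A | degA a = n}.Finite)
    (hX : ∀ n : ℕ, {x : X | degX x = n}.Finite)
    (hFP : ∀ n : ℕ, {p : A × FreeMonoid X | p ∉ P ∧ actDeg degA degX p = n}.Finite) :
    ∀ n : ℕ,
      {b | b ∈ canonicalBasis P ∧ actDeg degA degX b = n}.Finite ∧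
      ({b | b ∈ canonicalBasis P ∧ actDeg degA degX b = n}.ncard : ℤ) =
        ({a : A | degA a = n}.ncard : ℤ)
        + ∑ i ∈ Finset.range n,
            ({p : A × FreeMonoid X | p ∉ P ∧ actDeg degA degX p = i}.ncard : ℤ)
              * ({x : X | degX x = n - i}.ncard : ℤ)
        - ({p : A × FreeMonoid X | p ∉ P ∧ actDeg degA degX p = n}.ncard : ℤ) :=
  hilbert_series_subact_general degX degA hdegX P hP hA hX hFP
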